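/- arXiv:2312.12356 — 8 statements merged into one kernel-verified Lean document; each statement's English description precedes it below -/
import Mathlib

section
/- The assignment sending r ∈ [0,1] to the collection of sieves S on r with sup S = r defines a Grothendieck topology on the poset [0,1]. -/
open CategoryTheory

namespace SupGT

abbrev I := Set.Icc (0 : ℝ) 1

def sset {r : I} (S : Sieve r) : Set I := {x : I | ∃ f : x ⟶ r, S.arrows f}

lemma sset_dc {r : I} (S : Sieve r) {x y : I} (h : y ≤ x) (hx : x ∈ sset S) :
    y ∈ sset S := by
  obtain ⟨f, hf⟩ := hx
  exact ⟨homOfLE h ≫ f, S.downward_closed hf _⟩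

lemma sset_ub {r : I} (S : Sieve r) : r ∈ upperBounds (sset S) := by
  rintro x ⟨f, -⟩
  exact leOfHom f

end SupGT

open SupGT

/-- The assignment sending `r ∈ [0,1]` to the collection of sieves `S` on `r` with
`sup S = r` defines a Grothendieck topology on the poset `[0,1]` (viewed as a category). -/
theorem sup_grothendieck_topology :
    ∃ J : GrothendieckTopology (Set.Icc (0 : ℝ) 1),
      ∀ (r : Set.Icc (0 : ℝ) 1) (S : Sieve r),
        S ∈ J r ↔ IsLUB {x : Set.Icc (0 : ℝ) 1 | ∃ f : x ⟶ r, S.arrows f} r := by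
  refine ⟨{ sieves := fun r => {S | IsLUB (sset S) r}
            top_mem' := ?_
            pullback_stable' := ?_
            transitive' := ?_ }, fun r S => Iff.rfl⟩
  · intro r
    exact IsGreatest.isLUB ⟨⟨𝟙 r, trivial⟩, sset_ub ⊤⟩
  · intro r s S f hS
    refine ⟨sset_ub _, fun t ht => ?_⟩
    by_contra hts
    push_neg at hts
    have hnot : t ∉ upperBounds (sset S) := by
      intro h
      exact absurd (hS.2 h) (not_le.mpr (lt_of_lt_of_le hts (leOfHom f)))
    have hex : ∃ x ∈ sset S, t < x := by
      by_contra h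
      push_neg at h
      exact hnot h
    obtain ⟨x, hx, hxt⟩ := hex
    have hmin : (min x s) ∈ sset S := sset_dc S (min_le_left x s) hx
    obtain ⟨g, hg⟩ := hmin
    have : (min x s) ∈ sset (S.pullback f) := by
      refine ⟨homOfLE (min_le_right x s), ?_⟩
      show S.arrows (homOfLE (min_le_right x s) ≫ f)
      rwa [Subsingleton.elim (homOfLE (min_le_right x s) ≫ f) g]
    have := ht this
    exact absurd this (not_le.mpr (lt_min hxt hts))
  · intro r S hS R hR
    refine ⟨sset_ub _, fun t ht => ?_⟩
    refine hS.2 fun x hx => ?_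
    obtain ⟨f, hf⟩ := hx
    have hLUB : IsLUB (sset (R.pullback f)) x := hR hf
    refine hLUB.2 fun y hy => ?_
    obtain ⟨g, hg⟩ := hy
    exact ht ⟨g ≫ f, hg⟩
end

section
/- In the category Set, given a set X and a rooted cotree of sets over X in which the predecessors of each vertex form a jointly surjective family and every branch is continuous (the set at each limit stage is the inverse limit of the earlier sets along the branch) with all branches of length < κ, the transfinite compositions of the branches form a jointly surjective family onto X. -/
open Cardinal

/-- In `Set`: given a set `X` and a rooted cotree of sets over `X` — a partial order `T`
with top element `root` (the order `t ≤ s` meaning `s` lies between `t` and the root),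
in which the set of ancestors of each vertex is a chain, every branch (maximal chain) is
reverse well-ordered and of cardinality `< κ` (κ regular) — together with a functorial
diagram of sets `F` on `T` with `F root = X`, such that:
* (locally jointly surjective) for every vertex `t`, every element of `F t` has a
  preimage in `F s` for some immediate predecessor `s ⋖ t`, and
* (branches continuous) at every limit vertex `t` (a non-root vertex with no immediate
  successor), `F t` is the inverse limit of the sets strictly above `t`;
then the transfinite compositions of the branches are jointly surjective onto `X`:
every `x : F root` lifts to a compatible family along some branch through the root. -/
theorem cotree_branches_jointly_surjective
    (κ : Cardinal.{0}) (hκ : κ.IsRegular)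
    (T : Type) [PartialOrder T] (root : T) (hroot : ∀ t, t ≤ root)
    (htree : ∀ t : T, IsChain (· ≤ ·) {s | t ≤ s})
    (hwo : ∀ c : Set T, IsMaxChain (· ≤ ·) c → c.WellFoundedOn (· > ·))
    (hsmall : ∀ c : Set T, IsMaxChain (· ≤ ·) c → #c < κ)
    (F : T → Type) (map : ∀ {t s : T}, t ≤ s → F t → F s)
    (hid : ∀ (t : T) (x : F t), map (le_refl t) x = x)
    (hcomp : ∀ {t s r : T} (h : t ≤ s) (h' : s ≤ r) (x : F t),
      map h' (map h x) = map (h.trans h') x)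
    (hsurj : ∀ (t : T) (x : F t), ∃ s : T, ∃ hst : s ⋖ t, ∃ y : F s, map hst.le y = x)
    (hcont : ∀ t : T, t ≠ root → (¬ ∃ s, t ⋖ s) →
      ∀ y : ∀ s : T, t < s → F s,
        (∀ (s s' : T) (hs : t < s) (hs' : t < s') (hss' : s ≤ s'),
          map hss' (y s hs) = y s' hs') →
        ∃! x : F t, ∀ (s : T) (hs : t < s), map hs.le x = y s hs) :
    ∀ x : F root, ∃ c : Set T, IsMaxChain (· ≤ ·) c ∧ ∃ hrc : root ∈ c,
      ∃ y : ∀ t ∈ c, F t,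
        (∀ (t t' : T) (ht : t ∈ c) (ht' : t' ∈ c) (h : t ≤ t'),
          map h (y t ht) = y t' ht') ∧ y root hrc = x := by
  intro x
  classical
  -- "Good" sets: graphs of partial compatible sections whose domain is a chain through root
  set Good : Set (Set (Σ t : T, F t)) :=
    {S | (⟨root, x⟩ : Σ t : T, F t) ∈ S ∧
         (∀ p ∈ S, ∀ q ∈ S, (p : Σ t : T, F t).1 ≤ (q : Σ t : T, F t).1 ∨
            (q : Σ t : T, F t).1 ≤ (p : Σ t : T, F t).1) ∧
         (∀ p ∈ S, ∀ q ∈ S, ∀ h : (p : Σ t : T, F t).1 ≤ (q : Σ t : T, F t).1,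
            map h (p : Σ t : T, F t).2 = (q : Σ t : T, F t).2)} with hGoodDef
  -- the singleton is good
  have hsingle : ({⟨root, x⟩} : Set (Σ t : T, F t)) ∈ Good := by
    refine ⟨rfl, ?_, ?_⟩
    · rintro p rfl q rfl; exact Or.inl le_rfl
    · rintro p rfl q rfl h; exact hid root x
  -- unions of chains of good sets are good
  have hchains : ∀ ch ⊆ Good, IsChain (· ⊆ ·) ch → ch.Nonempty →
      ∃ ub ∈ Good, ∀ s ∈ ch, s ⊆ ub := by
    intro ch hchG hch ⟨S₀, hS₀⟩
    refine ⟨⋃₀ ch, ⟨?_, ?_, ?_⟩, fun s hs => Set.subset_sUnion_of_mem hs⟩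
    · exact ⟨S₀, hS₀, (hchG hS₀).1⟩
    · rintro p ⟨S₁, hS₁, hp⟩ q ⟨S₂, hS₂, hq⟩
      rcases hch.total hS₁ hS₂ with h12 | h21
      · exact (hchG hS₂).2.1 p (h12 hp) q hq
      · exact (hchG hS₁).2.1 p hp q (h21 hq)
    · rintro p ⟨S₁, hS₁, hp⟩ q ⟨S₂, hS₂, hq⟩ h
      rcases hch.total hS₁ hS₂ with h12 | h21
      · exact (hchG hS₂).2.2 p (h12 hp) q hq h
      · exact (hchG hS₁).2.2 p hp q (h21 hq) h
  obtain ⟨M, -, hMG, hMmax⟩ := zorn_subset_nonempty Good hchains _ hsingle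
  -- properties of M
  have hroot_mem : (⟨root, x⟩ : Σ t : T, F t) ∈ M := hMG.1
  have hcmpM := hMG.2.1
  have hcompatM := hMG.2.2
  -- single-valuedness
  have sval : ∀ (t : T) (a b : F t), (⟨t, a⟩ : Σ t : T, F t) ∈ M →
      (⟨t, b⟩ : Σ t : T, F t) ∈ M → a = b := by
    intro t a b ha hb
    have := hcompatM ⟨t, a⟩ ha ⟨t, b⟩ hb (le_refl t)
    rwa [hid] at this
  -- the domain chain
  set c : Set T := Sigma.fst '' M with hcDef
  have memc : ∀ q ∈ M, (q : Σ t : T, F t).1 ∈ c := fun q hq => ⟨q, hq, rfl⟩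
  have hy' : ∀ t, t ∈ c → ∃ a : F t, (⟨t, a⟩ : Σ t : T, F t) ∈ M := by
    rintro t ⟨⟨t', a⟩, hp, rfl⟩; exact ⟨a, hp⟩
  choose y hy using hy'
  have hrc : root ∈ c := memc _ hroot_mem
  have hycompat : ∀ (t t' : T) (ht : t ∈ c) (ht' : t' ∈ c) (h : t ≤ t'),
      map h (y t ht) = y t' ht' := fun t t' ht ht' h =>
    hcompatM ⟨t, y t ht⟩ (hy t ht) ⟨t', y t' ht'⟩ (hy t' ht') h
  have hyq : ∀ q (hq : q ∈ M), (q : Σ t : T, F t).2 = y (q : Σ t : T, F t).1 (memc q hq) :=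
    fun q hq => sval _ _ _ hq (hy _ (memc q hq))
  -- c is a chain
  have hcchain : IsChain (· ≤ ·) c := by
    rintro t ht t' ht' hne
    exact hcmpM ⟨t, y t ht⟩ (hy t ht) ⟨t', y t' ht'⟩ (hy t' ht')
  -- the extension principle: M cannot be properly extended
  have ext : ∀ (t : T) (a : F t), t ∉ c →
      (∀ q ∈ M, (q : Σ t : T, F t).1 ≤ t ∨ t ≤ (q : Σ t : T, F t).1) →
      (∀ q ∈ M, ∀ h : (q : Σ t : T, F t).1 ≤ t, map h (q : Σ t : T, F t).2 = a) →
      (∀ q ∈ M, ∀ h : t ≤ (q : Σ t : T, F t).1, map h a = (q : Σ t : T, F t).2) →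
      False := by
    intro t a htc hcmp h₁ h₂
    have hnotM : (⟨t, a⟩ : Σ t : T, F t) ∉ M := fun hm => htc (memc _ hm)
    have hins : insert (⟨t, a⟩ : Σ t : T, F t) M ∈ Good := by
      refine ⟨Set.mem_insert_of_mem _ hroot_mem, ?_, ?_⟩
      · rintro p (rfl | hp) q (rfl | hq)
        · exact Or.inl le_rfl
        · exact (hcmp q hq).symm
        · exact hcmp p hp
        · exact hcmpM p hp q hq
      · rintro p (rfl | hp) q (rfl | hq) h
        · exact hid t a
        · exact h₂ q hq h
        · exact h₁ p hp h
        · exact hcompatM p hp q hq h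
    exact hnotM (hMmax hins (Set.subset_insert _ _) (Set.mem_insert _ _))
  -- c is a maximal chain
  have hmax : IsMaxChain (· ≤ ·) c := by
    refine ⟨hcchain, ?_⟩
    intro c'' hc'' hsub
    by_contra hne
    obtain ⟨tstar, htstar, htstarc⟩ : ∃ t ∈ c'', t ∉ c := by
      by_contra h
      push_neg at h
      exact hne (Set.Subset.antisymm hsub h)
    -- Case A: some comparable-with-c element outside c is above some element of c
    by_cases hA : ∃ t, t ∉ c ∧ (∀ s ∈ c, t ≤ s ∨ s ≤ t) ∧ ∃ s, ∃ hs : s ∈ c, s ≤ t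
    · obtain ⟨t, htc, hcmp, s, hs, hst⟩ := hA
      refine ext t (map hst (y s hs)) htc ?_ ?_ ?_
      · intro q hq
        rcases hcmp _ (memc q hq) with h | h
        · exact Or.inr h
        · exact Or.inl h
      · intro q hq h
        rcases hcchain.total (memc q hq) hs with hqs | hsq
        · -- q.1 ≤ s ≤ t
          rw [hyq q hq, ← hycompat _ s (memc q hq) hs hqs, hcomp hqs hst]
        · -- s ≤ q.1 ≤ t
          rw [hyq q hq, ← hycompat s _ hs (memc q hq) hsq, hcomp hsq h]
      · intro q hq h
        have hsq : s ≤ (q : Σ t : T, F t).1 := hst.trans h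
        rw [hcomp hst h (y s hs)]
        exact hcompatM ⟨s, y s hs⟩ (hy s hs) q hq hsq
    · push_neg at hA
      -- every comparable element outside c is strictly below all of c
      have hbelow : ∀ t, t ∉ c → (∀ s ∈ c, t ≤ s ∨ s ≤ t) → ∀ s ∈ c, t < s := by
        intro t htc hcmp s hs
        have := hA t htc hcmp s hs
        rcases hcmp s hs with h | h
        · exact lt_of_le_of_ne h (fun he => htc (he ▸ hs))
        · exact absurd h this
      -- a maximal chain extending c''
      obtain ⟨c', hc'max, hsub'⟩ := hc''.exists_maxChain
      have hsubc' : c ⊆ c' := hsub.trans hsub'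
      -- elements of c' outside c are strictly below all of c
      have hE : ∀ u, u ∈ c' → u ∉ c → ∀ s ∈ c, u < s := by
        intro u hu huc
        exact hbelow u huc (fun s hs => hc'max.1.total hu (hsubc' hs))
      -- find a maximal element t₀ of c' \ c
      have hwf : (c' \ c).WellFoundedOn (· > ·) :=
        (hwo c' hc'max).subset Set.diff_subset
      obtain ⟨⟨t₀, ht₀⟩, -, hmin⟩ :=
        hwf.has_min Set.univ ⟨⟨tstar, hsub' htstar, htstarc⟩, trivial⟩
      have ht₀c' : t₀ ∈ c' := ht₀.1
      have ht₀c : t₀ ∉ c := ht₀.2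
      have hlt : ∀ s ∈ c, t₀ < s := hE t₀ ht₀c' ht₀c
      -- everything strictly above t₀ is in c
      have key : ∀ s, t₀ < s → s ∈ c := by
        intro s hs
        have hsc' : s ∈ c' := by
          by_contra hsc'
          have hins : IsChain (· ≤ ·) (insert s c') := by
            refine hc'max.1.insert ?_
            intro u hu hne'
            by_cases huc : u ∈ c
            · -- both in the chain of ancestors of t₀
              exact htree t₀ (show s ∈ {r | t₀ ≤ r} from hs.le)
                (show u ∈ {r | t₀ ≤ r} from (hlt u huc).le) hne'
            · -- u ∈ c' \ c : u ≤ t₀ < s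
              rcases eq_or_ne u t₀ with rfl | hne''
              · exact Or.inr hs.le
              · rcases hc'max.1.total hu ht₀c' with h | h
                · exact Or.inr (h.trans hs.le)
                · have : u > t₀ := lt_of_le_of_ne h (Ne.symm hne'')
                  exact absurd this (hmin ⟨u, hu, huc⟩ trivial)
          have := hc'max.2 hins (Set.subset_insert _ _)
          exact hsc' (this ▸ Set.mem_insert s c')
        by_cases hsc : s ∈ c
        · exact hsc
        · exact absurd hs (hmin ⟨s, hsc', hsc⟩ trivial)
      by_cases hsucc : ∃ s₀, t₀ ⋖ s₀
      · -- successor case: use local surjectivity at the minimum s₀ of c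
        obtain ⟨s₀, hcov⟩ := hsucc
        have hs₀c : s₀ ∈ c := key s₀ hcov.lt
        have hmin₀ : ∀ s ∈ c, s₀ ≤ s := by
          intro s hs
          rcases eq_or_ne s s₀ with rfl | hne'
          · exact le_rfl
          · rcases htree t₀ (show s₀ ∈ {r | t₀ ≤ r} from hcov.lt.le)
              (show s ∈ {r | t₀ ≤ r} from (hlt s hs).le) hne'.symm with h | h
            · exact h
            · exact absurd (lt_of_le_of_ne h hne') (hcov.2 (hlt s hs))
        obtain ⟨s₁, hcov₁, y₁, hy₁⟩ := hsurj s₀ (y s₀ hs₀c)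
        have hs₁c : s₁ ∉ c := fun h => absurd hcov₁.lt (not_lt_of_ge (hmin₀ s₁ h))
        refine ext s₁ y₁ hs₁c ?_ ?_ ?_
        · intro q hq
          exact Or.inr (hcov₁.le.trans (hmin₀ _ (memc q hq)))
        · intro q hq h
          exact absurd (h.trans_lt (hcov₁.lt.trans_le (hmin₀ _ (memc q hq))))
            (lt_irrefl _)
        · intro q hq h
          have hs₀q : s₀ ≤ (q : Σ t : T, F t).1 := hmin₀ _ (memc q hq)
          rw [← hcomp hcov₁.le hs₀q y₁, hy₁]
          exact hcompatM ⟨s₀, y s₀ hs₀c⟩ (hy s₀ hs₀c) q hq hs₀q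
      · -- limit case: use continuity at t₀
        have ht₀root : t₀ ≠ root := fun h => absurd (hlt root hrc) (h ▸ lt_irrefl root)
        obtain ⟨x₀, hx₀, -⟩ := hcont t₀ ht₀root hsucc (fun s hs => y s (key s hs))
          (fun s s' hs hs' hss' => hycompat s s' (key s hs) (key s' hs') hss')
        refine ext t₀ x₀ ht₀c ?_ ?_ ?_
        · intro q hq
          exact Or.inr (hlt _ (memc q hq)).le
        · intro q hq h
          exact absurd (h.trans_lt (hlt _ (memc q hq))) (lt_irrefl _)
        · intro q hq h
          have := hx₀ _ (hlt _ (memc q hq))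
          rw [hyq q hq]
          exact this
  exact ⟨c, hmax, hrc, y, hycompat, (sval root _ x (hy root hrc) hroot_mem)⟩
end

section
/- Let C be a small category and F : C^op → Set a presheaf. Then F is the filtered colimit (union) of its subfunctors G ⊆ F such that each G(x) has cardinality < λ, provided λ is a regular cardinal with |Mor(C)| < λ; moreover the poset of such subfunctors is λ-filtered (in fact λ-directed). -/
open CategoryTheory CategoryTheory.GrothendieckTopology Cardinal

/-- Let `C` be a small category with fewer than `λ` morphisms (`λ` regular) and
`F : Cᵒᵖ ⥤ Type` a presheaf. Then the poset of subfunctors `G ⊆ F` that are pointwise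
of cardinality `< λ` is `λ`-directed, and `F` is their union: every element of `F`
lies in one of them (so `F` is the `λ`-filtered colimit / union of these subfunctors). -/
theorem presheaf_union_of_small_subfunctors
    (lam : Cardinal.{0}) (hreg : lam.IsRegular)
    (C : Type) [SmallCategory C] (hC : #(Σ X Y : C, X ⟶ Y) < lam)
    (F : Cᵒᵖ ⥤ Type) :
    (∀ S : Set {G : Subfunctor F // ∀ x : Cᵒᵖ, #(G.obj x) < lam},
      #S < lam → ∃ B : {G : Subfunctor F // ∀ x : Cᵒᵖ, #(G.obj x) < lam},
        ∀ A ∈ S, A.val ≤ B.val) ∧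
    (∀ (x : Cᵒᵖ) (a : F.obj x), ∃ G : Subfunctor F,
      (∀ y : Cᵒᵖ, #(G.obj y) < lam) ∧ a ∈ G.obj x) := by
  constructor
  · intro S hS
    refine ⟨⟨⟨fun x => ⋃ A : S, (A.1 : Subfunctor F).obj x, ?_⟩, ?_⟩, ?_⟩
    · intro U V i y hy
      obtain ⟨A, hA⟩ := Set.mem_iUnion.1 hy
      exact Set.mem_iUnion.2 ⟨A, (A.1 : Subfunctor F).map i hA⟩
    · intro x
      refine lt_of_le_of_lt (Cardinal.mk_iUnion_le _) ?_
      apply Cardinal.mul_lt_of_lt hreg.aleph0_le hS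
      apply Cardinal.iSup_lt_of_isRegular hreg hS
      intro A
      exact (A.1 : {G : Subfunctor F // ∀ x : Cᵒᵖ, #(G.obj x) < lam}).2 x
    · intro A hA x y hy
      exact Set.mem_iUnion.2 ⟨⟨A, hA⟩, hy⟩
  · intro x a
    refine ⟨⟨fun y => Set.range (fun f : x ⟶ y => F.map f a), ?_⟩, ?_, ?_⟩
    · rintro U V i _ ⟨f, rfl⟩
      exact ⟨f ≫ i, by simp⟩
    · intro y
      refine lt_of_le_of_lt Cardinal.mk_range_le ?_
      refine lt_of_le_of_lt ?_ hC
      refine Cardinal.mk_le_of_injective (f := fun f : x ⟶ y => (⟨y.unop, x.unop, f.unop⟩ : Σ X Y : C, X ⟶ Y)) (fun f g h => ?_)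
      simp only [Sigma.mk.inj_iff, heq_eq_eq, true_and] at h
      exact Quiver.Hom.unop_inj h
    · exact ⟨𝟙 x, by simp⟩
end

section
/- Let C be a small category with finite limits, E a complete category, and M : C → E a finite-limit-preserving functor. Then the right Kan extension of M along the Yoneda embedding y : C → Lex(C, Set)^op preserves all limits; in fact it has a left adjoint given by x ↦ E(x, M(−)). -/
open CategoryTheory CategoryTheory.Limits Opposite

namespace Stmt12

variable (C : Type) [SmallCategory C] [HasFiniteLimits C]

/-- The predicate defining `Lex(C, Set)`, the category of finite-limit-preserving
functors `C ⥤ Type`. -/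
def lexProp : (C ⥤ Type) → Prop := fun F => Nonempty (PreservesFiniteLimits F)

/-- `Lex(C, Set)` as a full subcategory of the functor category. -/
abbrev Lex := ObjectProperty.FullSubcategory (lexProp C)

/-- The (co-)Yoneda embedding `y : C ⥤ Lex(C, Set)ᵒᵖ`, `x ↦ C(x, −)`. -/
noncomputable def yLex : C ⥤ (Lex C)ᵒᵖ :=
  (ObjectProperty.lift (lexProp C) coyoneda
    (fun X => ⟨⟨fun _ _ _ => inferInstance⟩⟩)).rightOp

variable (E : Type 1) [Category.{0} E] [HasLimitsOfSize.{0, 1} E]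
variable (M : C ⥤ E) [PreservesFiniteLimits M]

/-- The functor `E ⥤ Lex(C, Set)ᵒᵖ` sending `x` to the lex functor `c ↦ E(x, M c)`. -/
noncomputable def homIntoM : E ⥤ (Lex C)ᵒᵖ :=
  (ObjectProperty.lift (lexProp C) (coyoneda ⋙ (Functor.whiskeringLeft C E Type).obj M)
    (fun X => ⟨by
      haveI : PreservesFiniteLimits (coyoneda.obj X) := ⟨fun _ _ _ => inferInstance⟩
      exact comp_preservesFiniteLimits M (coyoneda.obj X)⟩)).rightOp

-- basic sanity checks
instance : HasLimitsOfSize.{0,0} E := hasLimitsOfSizeShrink.{0,0,0,1} E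

example (d : (Lex C)ᵒᵖ) : Type := StructuredArrow d (yLex C)

instance : (yLex C).HasPointwiseRightKanExtension M := by infer_instance

variable {C E M}

/-- The arrow `d ⟶ yLex.obj c` corresponding to an element `a : d.unop.1.obj c`. -/
noncomputable def arrowOf {d : (Lex C)ᵒᵖ} {c : C} (a : d.unop.1.obj c) : d ⟶ (yLex C).obj c :=
  Quiver.Hom.op (X := ((yLex C).obj c).unop) (Y := d.unop) (ObjectProperty.homMk
    (show coyoneda.obj (op c) ⟶ d.unop.1 from
      { app := fun e => TypeCat.ofHom fun g => d.unop.1.map g a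
        naturality := fun e e' f => by
          ext g
          dsimp
          exact FunctorToTypes.map_comp_apply d.unop.1 g f a }))

lemma elem_of_arrow {d : (Lex C)ᵒᵖ} {c : C} (f : d ⟶ (yLex C).obj c) :
    arrowOf (f.unop.hom.app c (𝟙 c)) = f := by
  apply Quiver.Hom.unop_inj
  ext e g
  refine (NatTrans.naturality_apply f.unop.hom g (𝟙 c)).symm.trans ?_
  exact congrArg (f.unop.hom.app e) (Category.id_comp (X := c) (Y := e) g)


lemma arrowOf_comp {d : (Lex C)ᵒᵖ} {c c' : C} (a : d.unop.1.obj c) (f : c ⟶ c') :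
    arrowOf a ≫ (yLex C).map f = arrowOf (d.unop.1.map f a) := by
  apply Quiver.Hom.unop_inj
  ext e g
  show d.unop.1.map (((yLex C).map f).unop.hom.app e g) a = d.unop.1.map g (d.unop.1.map f a)
  have : ((yLex C).map f).unop.hom.app e g = f ≫ g := rfl
  rw [this]
  exact FunctorToTypes.map_comp_apply d.unop.1 f g a

variable (M) in
/-- The cone on the Kan-extension diagram induced by a natural transformation. -/
@[simps]
noncomputable def coneOf {x : E} {d : (Lex C)ᵒᵖ} (φ : d.unop.1 ⟶ M ⋙ coyoneda.obj (op x)) :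
    Cone (StructuredArrow.proj d (yLex C) ⋙ M) where
  pt := x
  π :=
    { app := fun s => φ.app s.right (s.hom.unop.hom.app s.right (𝟙 s.right))
      naturality := fun s t k => by
        dsimp
        erw [Category.id_comp]
        have h1 : φ.app s.right (s.hom.unop.hom.app s.right (𝟙 s.right)) ≫ M.map k.right =
            φ.app t.right (d.unop.1.map k.right (s.hom.unop.hom.app s.right (𝟙 s.right))) :=
          (NatTrans.naturality_apply φ k.right (s.hom.unop.hom.app s.right (𝟙 s.right))).symm
        erw [h1]
        show φ.app t.right (t.hom.unop.hom.app t.right (𝟙 t.right))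
          = φ.app t.right (d.unop.1.map k.right (s.hom.unop.hom.app s.right (𝟙 s.right)))
        refine congrArg (φ.app t.right) ?_
        have h2 : s.hom.unop.hom.app t.right (𝟙 s.right ≫ k.right)
            = d.unop.1.map k.right (s.hom.unop.hom.app s.right (𝟙 s.right)) :=
          (NatTrans.naturality_apply s.hom.unop.hom k.right (𝟙 s.right))
        rw [← h2, ← StructuredArrow.w k]
        show s.hom.unop.hom.app t.right (k.right ≫ 𝟙 t.right)
          = s.hom.unop.hom.app t.right (𝟙 s.right ≫ k.right)
        refine congrArg (s.hom.unop.hom.app t.right) ?_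
        simp
        rfl }

variable (M) in
noncomputable def homEquivAux (x : E) (d : (Lex C)ᵒᵖ) :
    (d.unop.1 ⟶ M ⋙ coyoneda.obj (op x)) ≃ (x ⟶ limit (StructuredArrow.proj d (yLex C) ⋙ M)) where
  toFun φ := limit.lift _ (coneOf M φ)
  invFun h :=
    { app := fun c => TypeCat.ofHom fun a => h ≫ limit.π _ (StructuredArrow.mk (arrowOf a))
      naturality := fun c c' f => by
        ext a
        dsimp
        have h5 : limit.π (StructuredArrow.proj d (yLex C) ⋙ M) (StructuredArrow.mk (arrowOf a))
              ≫ M.map f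
            = limit.π (StructuredArrow.proj d (yLex C) ⋙ M)
              (StructuredArrow.mk (arrowOf (d.unop.1.map f a))) := by
          exact limit.w (StructuredArrow.proj d (yLex C) ⋙ M)
            (StructuredArrow.homMk f (arrowOf_comp a f) :
              StructuredArrow.mk (arrowOf a) ⟶ StructuredArrow.mk (arrowOf (d.unop.1.map f a)))
        exact (congrArg (h ≫ ·) h5).symm.trans (Category.assoc _ _ _).symm }
  left_inv φ := by
    ext c a
    dsimp
    erw [limit.lift_π]
    show φ.app c ((arrowOf a).unop.hom.app c (𝟙 c)) = φ.app c a
    exact congrArg (φ.app c) (show d.unop.1.map (𝟙 c) a = a by simp)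
  right_inv h := by
    apply limit.hom_ext
    intro s
    obtain ⟨⟨⟨⟩⟩, r, f⟩ := s
    rw [limit.lift_π]
    show h ≫ limit.π _ (StructuredArrow.mk (arrowOf (f.unop.hom.app r (𝟙 r)))) =
      h ≫ limit.π _ (StructuredArrow.mk f)
    rw [elem_of_arrow]


variable (C E M) in
noncomputable def theAdj : homIntoM C E M ⊣ (yLex C).pointwiseRightKanExtension M :=
  Adjunction.mkOfHomEquiv
    { homEquiv := fun x d =>
        { toFun := fun f => homEquivAux M x d f.unop.hom
          invFun := fun h => (ObjectProperty.homMk ((homEquivAux M x d).symm h)).op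
          left_inv := fun f => by
            show (ObjectProperty.homMk ((homEquivAux M x d).symm ((homEquivAux M x d) f.unop.hom))).op = f
            erw [Equiv.symm_apply_apply]
            rfl
          right_inv := fun h => by
            show homEquivAux M x d ((homEquivAux M x d).symm h) = h
            exact (homEquivAux M x d).apply_symm_apply h }
      homEquiv_naturality_left_symm := by
        intro x' x d f g
        apply Quiver.Hom.unop_inj
        ext c a
        show (f ≫ g) ≫ limit.π _ (StructuredArrow.mk (arrowOf a))
          = f ≫ (g ≫ limit.π _ (StructuredArrow.mk (arrowOf a)))
        exact Category.assoc _ _ _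
      homEquiv_naturality_right := by
        intro x d d' f g
        apply limit.hom_ext
        intro s
        show limit.lift _ (coneOf M (f ≫ g).unop.hom) ≫ limit.π _ s
          = (limit.lift _ (coneOf M f.unop.hom)
              ≫ ((yLex C).pointwiseRightKanExtension M).map g) ≫ limit.π _ s
        simp only [Functor.pointwiseRightKanExtension_map, Category.assoc, limit.lift_π]
        erw [Category.assoc, limit.lift_π, limit.lift_π]
        rfl }

/-- Let `C` be a small category with finite limits, `E` a complete category, and
`M : C ⥤ E` finite-limit-preserving. Then the right Kan extension `R` of `M` along the
Yoneda embedding `y : C ⥤ Lex(C, Set)ᵒᵖ` exists and has a left adjoint given by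
`x ↦ E(x, M(−))`; in particular `R` preserves all limits. -/
theorem ranYonedaLex_has_left_adjoint :
    ∃ (R : (Lex C)ᵒᵖ ⥤ E) (α : yLex C ⋙ R ⟶ M),
      R.IsRightKanExtension α ∧ Nonempty (homIntoM C E M ⊣ R) :=
  ⟨(yLex C).pointwiseRightKanExtension M, (yLex C).pointwiseRightKanExtensionCounit M,
    inferInstance, ⟨theAdj C E M⟩⟩

end Stmt12
end

section
/- Let κ ◁ λ be regular cardinals (κ sharply smaller than λ). Then for any κ-directed poset P, the κ-directed subsets of P of size < λ form a λ-directed poset under inclusion. -/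
/-!
By regularity of `λ`, the union `U` of fewer than `λ` sets of size `< λ` has size `< λ`, so it
suffices to enlarge `U` to a `κ`-directed set of size `< λ`. If `κ < λ`, this is the
implication (iii) → (iv) of Adámek–Rosický, Theorem 2.11, proved in Mathlib as
`Cardinal.SharplyLT.exists_isCardinalFiltered_set_of_exists_cofinal`: iterate `κ` times the
operation adjoining upper bounds of the members of a cofinal family of `< κ`-subsets, of
size `< λ` by `κ ◁ λ`; regularity of `κ` makes the union of the iterates `κ`-directed.
If `λ ≤ κ`, the set `U` itself has an upper bound `p`, and `insert p U` is `κ`-directed.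
-/

open Cardinal

namespace Stmt14

/-- `κ` is sharply smaller than `λ` (`κ ◁ λ`): for every set `X` of size `< λ`, the
poset of subsets of `X` of size `< κ` has a cofinal subset of size `< λ`. -/
def SharplySmaller (κ lam : Cardinal.{0}) : Prop :=
  ∀ X : Type, #X < lam → ∃ S : Set (Set X),
    (∀ s ∈ S, #s < κ) ∧ #S < lam ∧ ∀ t : Set X, #t < κ → ∃ s ∈ S, t ⊆ s

/-- A subset `A` of a poset is `μ`-directed: every subset of `A` of size `< μ` has an
upper bound in `A`. -/
def IsDirectedOfSize {P : Type} [PartialOrder P] (μ : Cardinal.{0}) (A : Set P) : Prop :=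
  ∀ s : Set P, s ⊆ A → #s < μ → ∃ p ∈ A, ∀ x ∈ s, x ≤ p

open CategoryTheory CardinalDirectedPoset

variable {κ lam : Cardinal.{0}} {P : Type} [PartialOrder P]

theorem exists_isCofinal_of_sharplySmaller (h : SharplySmaller κ lam) (X : Type)
    (hX : HasCardinalLT X lam) :
    ∃ Y : Set (SetCardinalLT κ X), HasCardinalLT Y lam ∧ IsCofinal Y := by
  obtain ⟨S, hSκ, hSlam, hScofinal⟩ := h X ((hasCardinalLT_iff_cardinal_mk_lt _ _).1 hX)
  refine ⟨Subtype.val ⁻¹' S, ?_, fun t ↦ ?_⟩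
  · rw [hasCardinalLT_iff_cardinal_mk_lt]
    exact (mk_preimage_of_injective _ _ Subtype.val_injective).trans_lt hSlam
  · obtain ⟨s, hs, hts⟩ := hScofinal t.1 ((hasCardinalLT_iff_cardinal_mk_lt _ _).1 t.2)
    exact ⟨⟨s, (hasCardinalLT_iff_cardinal_mk_lt _ _).2 (hSκ s hs)⟩, hs, hts⟩

theorem isCardinalFiltered_of_forall_bddAbove [Fact κ.IsRegular]
    (hP : ∀ s : Set P, #s < κ → BddAbove s) : IsCardinalFiltered P κ :=
  isCardinalFiltered_preorder P κ fun _ f hK ↦ by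
    obtain ⟨p, hp⟩ := hP (Set.range f) (mk_range_le.trans_lt hK)
    exact ⟨p, fun k ↦ hp (Set.mem_range_self k)⟩

theorem IsDirectedOfSize.of_isCardinalFiltered [Fact κ.IsRegular] {A : Set P}
    [IsCardinalFiltered A κ] : IsDirectedOfSize κ A := by
  intro s hsA hsκ
  let f : s → A := fun x ↦ ⟨x, hsA x.2⟩
  have hs : HasCardinalLT s κ := (hasCardinalLT_iff_cardinal_mk_lt _ _).2 hsκ
  exact ⟨_, (IsCardinalFiltered.max f hs).2,
    fun x hx ↦ leOfHom (IsCardinalFiltered.toMax f hs ⟨x, hx⟩)⟩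

theorem isDirectedOfSize_insert {μ : Cardinal.{0}} {U : Set P} {p : P}
    (hp : p ∈ upperBounds U) : IsDirectedOfSize μ (insert p U) := by
  refine fun s hs _ ↦ ⟨p, Set.mem_insert p U, fun x hx ↦ ?_⟩
  rcases hs hx with rfl | hxU
  exacts [le_rfl, hp hxU]

theorem exists_isDirectedOfSize_superset (hκ : κ.IsRegular) (hlam : lam.IsRegular)
    (hsharp : SharplySmaller κ lam) (hP : ∀ s : Set P, #s < κ → BddAbove s)
    (U : Set P) (hU : #U < lam) : ∃ B, U ⊆ B ∧ IsDirectedOfSize κ B ∧ #B < lam := by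
  rcases lt_or_ge κ lam with hκlam | hlamκ
  · have := Fact.mk hκ
    have := Fact.mk hlam
    have := isCardinalFiltered_of_forall_bddAbove hP
    obtain ⟨B, hUB, hB, hBlam⟩ := SharplyLT.exists_isCardinalFiltered_set_of_exists_cofinal
      hκlam (exists_isCofinal_of_sharplySmaller hsharp) U
      ((hasCardinalLT_iff_cardinal_mk_lt _ _).2 hU)
    exact ⟨B, hUB, .of_isCardinalFiltered, (hasCardinalLT_iff_cardinal_mk_lt _ _).1 hBlam⟩
  · obtain ⟨p, hp⟩ := hP U (hU.trans_le hlamκ)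
    refine ⟨insert p U, Set.subset_insert p U, isDirectedOfSize_insert hp, ?_⟩
    exact mk_insert_le.trans_lt
      (add_lt_of_lt hlam.aleph0_le hU (one_lt_aleph0.trans_le hlam.aleph0_le))

/-- Let `κ ◁ λ` be regular cardinals with `κ` sharply smaller than `λ`. For any
`κ`-directed poset `P`, the `κ`-directed subsets of `P` of size `< λ` form a
`λ`-directed poset under inclusion. -/
theorem kappaDirectedSubsets_lambdaDirected
    (κ lam : Cardinal.{0}) (hκ : κ.IsRegular) (hlam : lam.IsRegular)
    (hsharp : SharplySmaller κ lam)
    (P : Type) [PartialOrder P]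
    (hP : ∀ s : Set P, #s < κ → ∃ p : P, ∀ x ∈ s, x ≤ p) :
    ∀ S : Set {A : Set P // IsDirectedOfSize κ A ∧ #A < lam},
      #S < lam → ∃ B : {A : Set P // IsDirectedOfSize κ A ∧ #A < lam},
        ∀ A ∈ S, A.val ⊆ B.val := by
  intro S hS
  have hU : #(⋃ A ∈ S, A.val) < lam :=
    (card_biUnion_lt_iff_forall_of_isRegular hlam hS).2 fun A _ ↦ A.2.2
  obtain ⟨B, hUB, hB, hBlam⟩ := exists_isDirectedOfSize_superset hκ hlam hsharp hP _ hU
  exact ⟨⟨B, hB, hBlam⟩, fun A hA ↦ (Set.subset_biUnion_of_mem hA).trans hUB⟩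

end Stmt14
end

section
/- Let F : C → D be a functor between small categories, each with < κ limits, such that F preserves them, and let a denote sheafification for a Grothendieck topology on D whose covering sieves form a κ-filtered poset under refinement on each object. If the topology's plus-construction on D is computed by κ-filtered colimits over covering sieves, then the composite of the Yoneda embedding with sheafification, ay : D → Sh(D), preserves < κ limits. -/
/-!
`(P⁺)(X)` is the colimit over `(J.Cover X)ᵒᵖ` of the compatible families of `P` on the covers of
`X`. Forming these families preserves all limits, so `(−)⁺` preserves every limit that `colim` over
each `(J.Cover X)ᵒᵖ` preserves. The refinement hypothesis says that `(J.Cover X)ᵒᵖ` is `κ`-filtered,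
and `κ`-filtered colimits commute with `κ`-small limits in `Type`. Hence `a = (−)⁺⁺` preserves
`κ`-small limits, and so does `ay`, since the Yoneda embedding preserves all limits.
-/

open CategoryTheory CategoryTheory.Limits Cardinal

universe w u v s t

namespace CategoryTheory

namespace WithTerminal

variable {J : Type w} [SmallCategory J]

noncomputable def extendByColimit : (J ⥤ Type w) ⥤ (WithTerminal J ⥤ Type w) where
  obj G := lift G (colimit.ι G) (fun _ _ f => colimit.w G f)
  map {G H} η :=
    { app := fun
        | .of j => η.app j
        | .star => colim.map η
      naturality := by
        rintro (a | a) (b | b) f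
        · exact η.naturality f
        · exact ι_colimMap η a
        · exact (false_of_from_star f).elim
        · exact (Category.id_comp _).trans (Category.comp_id _).symm }
  map_id G := NatTrans.ext <| funext fun
    | .of _ => rfl
    | .star => colim.map_id G
  map_comp η θ := NatTrans.ext <| funext fun
    | .of _ => rfl
    | .star => colim.map_comp η θ

def coconeStar : Cocone (incl : J ⥤ WithTerminal J) where
  pt := .star
  ι := { app := homFrom }

end WithTerminal

namespace Limits

open WithTerminal

/- Mathlib's commutation of `κ`-filtered colimits with `κ`-small limits is stated for functors
`C ⥤ Type` evaluated at a colimit cocone in `C`. Taking `C = WithTerminal J` and extending every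
`G k` by its colimit at `star` turns `colim` into evaluation at `star`. -/
theorem preservesLimitsOfShape_colim_of_isCardinalFiltered {J K : Type w} [SmallCategory J]
    [SmallCategory K] (κ : Cardinal.{w}) [Fact κ.IsRegular] [IsCardinalFiltered J κ]
    (hK : HasCardinalLT (Arrow K) κ) :
    PreservesLimitsOfShape K (colim : (J ⥤ Type w) ⥤ Type w) where
  preservesLimit {G} := by
    let F := G ⋙ extendByColimit
    have hL : IsColimit ((limit F).mapCocone coconeStar) :=
      Functor.Accessible.Limits.isColimitMapCocone (limit.cone F)
        (fun Y => isLimitOfPreserves ((evaluation _ _).obj Y) (limit.isLimit F)) κ hK _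
        (fun k => colimit.isColimit (G.obj k))
    let d : Cone G := ((Functor.whiskeringLeft _ _ _).obj incl).mapCone (limit.cone F)
    have hd : IsLimit d :=
      isLimitOfPreserves ((Functor.whiskeringLeft _ _ _).obj incl) (limit.isLimit F)
    refine preservesLimit_of_preserves_limit_cone hd ?_
    refine IsLimit.ofIsoLimit (isLimitOfPreserves ((evaluation _ _).obj .star) (limit.isLimit F))
      (Cone.ext ((colimit.isColimit _).coconePointUniqueUpToIso hL) fun k => ?_).symm
    refine colimit.hom_ext fun j => ?_
    exact (ι_colimMap (d.π.app k) j).trans <|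
      ((limit.π F k).naturality (homFrom j)).symm.trans
        (IsColimit.comp_coconePointUniqueUpToIso_hom_assoc (colimit.isColimit _) hL j
          ((limit.π F k).app .star)).symm

end Limits

namespace GrothendieckTopology

open Opposite

variable {C : Type u} [Category.{v} C] (J : GrothendieckTopology C)

theorem isCardinalFiltered_cover (κ : Cardinal.{max u v}) [Fact κ.IsRegular] (X : C)
    (h : ∀ S : Set (Sieve X), (∀ T ∈ S, T ∈ J X) → #S < κ → ∃ R ∈ J X, ∀ T ∈ S, R ≤ T) :
    IsCardinalFiltered (J.Cover X)ᵒᵖ κ where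
  nonempty_cocone {A _} F hA := by
    let sieves : A → Sieve X := fun a => (F.obj a).unop.1
    have hcard : #(Set.range sieves) < κ := (hasCardinalLT_iff_cardinal_mk_lt _ _).1 <|
      (hasCardinalLT_of_hasCardinalLT_arrow hA).of_surjective _ Set.rangeFactorization_surjective
    obtain ⟨R, hR, hle⟩ := h _ (by rintro _ ⟨a, rfl⟩; exact (F.obj a).unop.2) hcard
    exact ⟨{ pt := op ⟨R, hR⟩
             ι := { app a := (homOfLE (hle _ ⟨a, rfl⟩)).op
                    naturality _ _ _ := Quiver.Hom.unop_inj (Subsingleton.elim _ _) } }⟩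

variable {D : Type w} [Category.{t} D] {K : Type s} [SmallCategory K] [HasLimitsOfShape K D]
  [∀ (P : Cᵒᵖ ⥤ D) (X : C) (S : J.Cover X), HasMultiequalizer (S.index P)]
  [∀ X : C, HasColimitsOfShape (J.Cover X)ᵒᵖ D]
  [∀ X : C, PreservesLimitsOfShape K (colim : ((J.Cover X)ᵒᵖ ⥤ D) ⥤ D)]

theorem preservesLimitsOfShape_plusFunctor_of_colim :
    PreservesLimitsOfShape K (J.plusFunctor D) :=
  preservesLimitsOfShape_of_evaluation _ _ fun X =>
    preservesLimitsOfShape_of_natIso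
      (NatIso.ofComponents (fun _ => Iso.refl _) (fun _ =>
        (Category.comp_id _).trans (Category.id_comp _).symm) :
        J.diagramFunctor D X.unop ⋙ colim ≅ J.plusFunctor D ⋙ (evaluation Cᵒᵖ D).obj X)

end GrothendieckTopology

variable {C : Type u} [Category.{v} C] (J : GrothendieckTopology C) {K : Type (max u v)}
  [SmallCategory K]

theorem preservesLimitsOfShape_presheafToSheaf_of_colim
    [∀ X : C, PreservesLimitsOfShape K (colim : ((J.Cover X)ᵒᵖ ⥤ Type (max u v)) ⥤ _)] :
    PreservesLimitsOfShape K (presheafToSheaf J (Type (max u v))) :=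
  have := J.preservesLimitsOfShape_plusFunctor_of_colim (D := Type (max u v)) (K := K)
  have : PreservesLimitsOfShape K (J.sheafification (Type (max u v))) :=
    comp_preservesLimitsOfShape _ _
  have : PreservesLimitsOfShape K (sheafification J (Type (max u v))) :=
    preservesLimitsOfShape_of_natIso (plusPlusFunctorIsoSheafification J _)
  preservesLimitsOfShape_of_reflects_of_preserves _ (sheafToPresheaf J _)

end CategoryTheory

theorem ay_preserves_small_limits_general
    (κ : Cardinal.{0}) (hκ : κ.IsRegular)
    (D : Type) [SmallCategory D]
    (J : GrothendieckTopology D)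
    (hfilt : ∀ (X : D) (S : Set (Sieve X)), (∀ T ∈ S, T ∈ J X) → #S < κ →
      ∃ R ∈ J X, ∀ T ∈ S, R ≤ T) :
    ∀ (K : Type) (_ : SmallCategory K), #(Σ a b : K, a ⟶ b) < κ →
      Nonempty (PreservesLimitsOfShape K (yoneda ⋙ presheafToSheaf J (Type))) := by
  intro K _ hK
  have : Fact κ.IsRegular := ⟨hκ⟩
  have hArrow : HasCardinalLT (Arrow K) κ :=
    (hasCardinalLT_iff_of_equiv (Arrow.equivSigma K) κ).2
      ((hasCardinalLT_iff_cardinal_mk_lt _ _).2 hK)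
  have := fun X => J.isCardinalFiltered_cover κ X (hfilt X)
  have := fun X =>
    preservesLimitsOfShape_colim_of_isCardinalFiltered (J := (J.Cover X)ᵒᵖ) κ hArrow
  have := preservesLimitsOfShape_presheafToSheaf_of_colim J (K := K)
  exact ⟨comp_preservesLimitsOfShape _ _⟩

/-- Let `F : C ⥤ D` be a functor between small categories having all limits of size
`< κ`, preserving them, and let `J` be a Grothendieck topology on `D` such that on
every object the poset of covering sieves is `κ`-filtered under refinement (every
family of `< κ` covering sieves admits a common covering refinement); the
plus-construction is then computed by `κ`-filtered colimits over covering sieves.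
Then the composite `ay : D ⥤ Sh(D, J)` of the Yoneda embedding with sheafification
preserves all limits of size `< κ`. -/
theorem ay_preserves_small_limits
    (κ : Cardinal.{0}) (hκ : κ.IsRegular)
    (C D : Type) [SmallCategory C] [SmallCategory D]
    (hlimC : ∀ (K : Type) (_ : SmallCategory K), #(Σ a b : K, a ⟶ b) < κ →
      HasLimitsOfShape K C)
    (hlimD : ∀ (K : Type) (_ : SmallCategory K), #(Σ a b : K, a ⟶ b) < κ →
      HasLimitsOfShape K D)
    (F : C ⥤ D)
    (hF : ∀ (K : Type) (_ : SmallCategory K), #(Σ a b : K, a ⟶ b) < κ →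
      Nonempty (PreservesLimitsOfShape K F))
    (J : GrothendieckTopology D)
    (hfilt : ∀ (X : D) (S : Set (Sieve X)), (∀ T ∈ S, T ∈ J X) → #S < κ →
      ∃ R ∈ J X, ∀ T ∈ S, R ≤ T) :
    ∀ (K : Type) (_ : SmallCategory K), #(Σ a b : K, a ⟶ b) < κ →
      Nonempty (PreservesLimitsOfShape K (yoneda ⋙ presheafToSheaf J (Type))) :=
  ay_preserves_small_limits_general κ hκ D J hfilt
end

section
/- In a Grothendieck topos of sheaves Sh(C, τ) on a site, for any natural transformation α : a y(x) ⇒ a y(x') between sheafified representables, there exists a τ-covering family (f_i : u_i → x)_i in C and morphisms g_i : u_i → x' in C such that α ∘ a y(f_i) = a y(g_i) for each i. -/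
/-!
Let `β : y(x) ⟶ a y(x')` be the presheaf map adjoint to `α`. The unit `η : y(x') ⟶ a y(x')`
is locally surjective, so the section of `a y(x')` classified by `β` lifts along `η` after
restriction along every arrow `f` of a covering sieve of `x`; by Yoneda each lift is a
morphism `g : u ⟶ x'`, and `y(f) ≫ β = y(g) ≫ η` transposes to `a y(f) ≫ α = a y(g)`.
-/

open CategoryTheory

namespace CategoryTheory

universe v u w

variable {C : Type u} [Category.{v} C]

lemma Presheaf.exists_yoneda_map_comp_eq_of_mem_imageSieve {F G : Cᵒᵖ ⥤ Type v} (p : F ⟶ G)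
    {x u : C} (β : yoneda.obj x ⟶ G) {f : u ⟶ x} (hf : imageSieve p (yonedaEquiv β) f) :
    ∃ ψ : yoneda.obj u ⟶ F, yoneda.map f ≫ β = ψ ≫ p := by
  refine ⟨yonedaEquiv.symm (localPreimage p (yonedaEquiv β) f hf), yonedaEquiv.injective ?_⟩
  rw [← yonedaEquiv_naturality, yonedaEquiv_comp, Equiv.apply_symm_apply, app_localPreimage]

lemma presheafToSheaf_map_comp_eq_of_toSheafify {D : Type w} [Category D]
    {J : GrothendieckTopology C} [HasWeakSheafify J D] {P P' Q : Cᵒᵖ ⥤ D} (φ : P' ⟶ P) (ψ : P' ⟶ Q)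
    (α : (presheafToSheaf J D).obj P ⟶ (presheafToSheaf J D).obj Q)
    (h : φ ≫ toSheafify J P ≫ α.hom = ψ ≫ toSheafify J Q) :
    (presheafToSheaf J D).map φ ≫ α = (presheafToSheaf J D).map ψ := by
  refine Sheaf.hom_ext (sheafify_hom_ext J _ _ ((presheafToSheaf J D).obj Q).property ?_)
  simpa only [ObjectProperty.FullSubcategory.comp_hom, ← toSheafify_naturality_assoc,
    ← toSheafify_naturality] using h

end CategoryTheory

/-- In a Grothendieck topos `Sh(C, τ)`, any map `α : a y(x) ⟶ a y(x')` between
sheafified representables is locally induced by morphisms of the site: there is a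
`τ`-covering family `(f i : u i ⟶ x)` and morphisms `g i : u i ⟶ x'` in `C` with
`a y(f i) ≫ α = a y(g i)` for each `i`. -/
theorem map_of_sheafified_representables_locally_induced
    (C : Type) [SmallCategory C] (J : GrothendieckTopology C)
    (x x' : C)
    (α : (yoneda ⋙ presheafToSheaf J (Type)).obj x ⟶ (yoneda ⋙ presheafToSheaf J (Type)).obj x') :
    ∃ (ι : Type) (u : ι → C) (f : ∀ i, u i ⟶ x) (g : ∀ i, u i ⟶ x'),
      Sieve.generate (Presieve.ofArrows u f) ∈ J x ∧
      ∀ i, (yoneda ⋙ presheafToSheaf J (Type)).map (f i) ≫ α =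
        (yoneda ⋙ presheafToSheaf J (Type)).map (g i) := by
  let β : yoneda.obj x ⟶ sheafify J (yoneda.obj x') := toSheafify J (yoneda.obj x) ≫ α.hom
  let S := Presheaf.imageSieve (toSheafify J (yoneda.obj x')) (yonedaEquiv β)
  have hS : S ∈ J x := Presheaf.imageSieve_mem J (toSheafify J (yoneda.obj x')) (yonedaEquiv β)
  choose ψ hψ using fun i : S.arrows.category =>
    Presheaf.exists_yoneda_map_comp_eq_of_mem_imageSieve _ β i.property
  refine ⟨S.arrows.category, fun i => i.obj.left, fun i => i.obj.hom,
    fun i => yoneda.preimage (ψ i), by rwa [← Sieve.ofArrows_category S] at hS, fun i => ?_⟩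
  refine presheafToSheaf_map_comp_eq_of_toSheafify _ _ α ?_
  rw [Functor.map_preimage]
  exact hψ i
end

section
/- In a Grothendieck topos Sh(C, τ), for any monomorphism ι : F ⇒ a y(x) into a sheafified representable, there is an epimorphic family of maps β_i : a y(u_i) ⇒ F from sheafified representables such that each composite ι ∘ β_i equals a y(g_i) for some morphism g_i : u_i → x of C. -/
/-!
For a section `t` of `F`, the section `ι t` of `a y(x)` lies, locally on a covering sieve, in the
image of the unit `y(x) ⟶ a y(x)`, because that unit is locally surjective. So `t` is locally a
section `s` with `ι s` the image of some `g : u ⟶ x`, and as a map `a y(u) ⟶ F` such an `s`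
satisfies `s ≫ ι = a y(g)`. Two maps out of `F` into a sheaf that agree on all these `s` agree
locally on every section, hence agree.
-/

open CategoryTheory Opposite

universe w v u

namespace CategoryTheory

lemma Sheaf.eq_of_equalizerSieve_mem {C : Type u} [Category.{v} C] {J : GrothendieckTopology C}
    {G : Sheaf J (Type w)} {U : Cᵒᵖ} {a b : G.obj.obj U}
    (h : Presheaf.equalizerSieve (F := G.obj) a b ∈ J U.unop) : a = b :=
  (((isSheaf_iff_isSheaf_of_type J G.obj).mp G.property).isSeparated _ h).ext fun _ _ hf => hf

variable {C : Type u} [SmallCategory C] {J : GrothendieckTopology C}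

lemma Sheaf.hom_ext_of_eq_of_mem_range_toSheafify {P : Cᵒᵖ ⥤ Type u} {F G : Sheaf J (Type u)}
    (ι : F ⟶ (presheafToSheaf J (Type u)).obj P) {h k : F ⟶ G}
    (hhk : ∀ (Y : C) (s : F.obj.obj (op Y)),
      ι.hom.app (op Y) s ∈ Set.range ((toSheafify J P).app (op Y)) →
        h.hom.app (op Y) s = k.hom.app (op Y) s) :
    h = k := by
  ext U t
  apply Sheaf.eq_of_equalizerSieve_mem
  refine J.superset_covering (fun Y f hf => ?_)
    (Presheaf.imageSieve_mem J (toSheafify J P) (ι.hom.app U t))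
  obtain ⟨p, hp⟩ := hf
  have hrestrict : ι.hom.app (op Y) (F.obj.map f.op t) = (toSheafify J P).app (op Y) p :=
    (NatTrans.naturality_apply ι.hom f.op t).trans hp.symm
  change G.obj.map f.op (h.hom.app U t) = G.obj.map f.op (k.hom.app U t)
  rw [← NatTrans.naturality_apply h.hom, ← NatTrans.naturality_apply k.hom]
  exact hhk Y _ ⟨p, hrestrict.symm⟩

noncomputable def sheafifiedYonedaEquiv {X : C} {G : Sheaf J (Type u)} :
    ((yoneda ⋙ presheafToSheaf J (Type u)).obj X ⟶ G) ≃ G.obj.obj (op X) :=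
  ((sheafificationAdjunction J (Type u)).homEquiv (yoneda.obj X) G).trans yonedaEquiv

lemma sheafifiedYonedaEquiv_symm_naturality_right {X : C} {G G' : Sheaf J (Type u)}
    (s : G.obj.obj (op X)) (h : G ⟶ G') :
    sheafifiedYonedaEquiv.symm s ≫ h = sheafifiedYonedaEquiv.symm (h.hom.app (op X) s) := by
  simp only [sheafifiedYonedaEquiv, Equiv.symm_trans_apply]
  rw [← Adjunction.homEquiv_naturality_right_symm, yonedaEquiv_symm_naturality_right]
  rfl

lemma sheafifiedYonedaEquiv_map {X Y : C} (g : Y ⟶ X) :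
    sheafifiedYonedaEquiv ((yoneda ⋙ presheafToSheaf J (Type u)).map g) =
      (toSheafify J (yoneda.obj X)).app (op Y) g := by
  have hunit : (sheafificationAdjunction J (Type u)).homEquiv (yoneda.obj Y) _
      ((yoneda ⋙ presheafToSheaf J (Type u)).map g) =
      yoneda.map g ≫ toSheafify J (yoneda.obj X) := by
    rw [Adjunction.homEquiv_unit]
    exact ((sheafificationAdjunction J (Type u)).unit.naturality (yoneda.map g)).symm
  rw [sheafifiedYonedaEquiv, Equiv.trans_apply, hunit, yonedaEquiv_comp, yonedaEquiv_yoneda_map]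

end CategoryTheory

theorem mono_into_sheafified_representable_covered_general
    (C : Type) [SmallCategory C] (J : GrothendieckTopology C)
    (x : C) (F : Sheaf J (Type))
    (ι : F ⟶ (yoneda ⋙ presheafToSheaf J (Type)).obj x) :
    ∃ (I : Type) (u : I → C)
      (β : ∀ i, (yoneda ⋙ presheafToSheaf J (Type)).obj (u i) ⟶ F)
      (g : ∀ i, u i ⟶ x),
      (∀ (G : Sheaf J (Type)) (h k : F ⟶ G), (∀ i, β i ≫ h = β i ≫ k) → h = k) ∧
      ∀ i, β i ≫ ι = (yoneda ⋙ presheafToSheaf J (Type)).map (g i) := by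
  refine ⟨Σ Y : C, {s : F.obj.obj (op Y) //
      ι.hom.app (op Y) s ∈ Set.range ((toSheafify J (yoneda.obj x)).app (op Y))},
    fun i => i.1, fun i => sheafifiedYonedaEquiv.symm i.2.1, fun i => i.2.2.choose, ?_, ?_⟩
  · intro G h k hhk
    refine Sheaf.hom_ext_of_eq_of_mem_range_toSheafify ι fun Y s hs => ?_
    simpa only [sheafifiedYonedaEquiv_symm_naturality_right, EmbeddingLike.apply_eq_iff_eq]
      using hhk ⟨Y, s, hs⟩
  · rintro ⟨Y, s, hs⟩
    rw [sheafifiedYonedaEquiv_symm_naturality_right, Equiv.symm_apply_eq, sheafifiedYonedaEquiv_map]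
    exact hs.choose_spec.symm

/-- In a Grothendieck topos `Sh(C, τ)`, for any monomorphism `ι : F ⟶ a y(x)` into a
sheafified representable, there is a (jointly) epimorphic family
`β i : a y(u i) ⟶ F` from sheafified representables such that each composite
`β i ≫ ι` is of the form `a y(g i)` for some morphism `g i : u i ⟶ x` of `C`. -/
theorem mono_into_sheafified_representable_covered
    (C : Type) [SmallCategory C] (J : GrothendieckTopology C)
    (x : C) (F : Sheaf J (Type))
    (ι : F ⟶ (yoneda ⋙ presheafToSheaf J (Type)).obj x) (hι : Mono ι) :
    ∃ (I : Type) (u : I → C)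
      (β : ∀ i, (yoneda ⋙ presheafToSheaf J (Type)).obj (u i) ⟶ F)
      (g : ∀ i, u i ⟶ x),
      (∀ (G : Sheaf J (Type)) (h k : F ⟶ G), (∀ i, β i ≫ h = β i ≫ k) → h = k) ∧
      ∀ i, β i ≫ ι = (yoneda ⋙ presheafToSheaf J (Type)).map (g i) :=
  mono_into_sheafified_representable_covered_general C J x F ι
end
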